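/- Let (V, 𝓗) be an arrangement, H₀ ∈ 𝓗, with deleted arrangement 𝓗' = 𝓗 ∖ {H₀} and induced arrangement 𝓗'' = {H ∩ H₀ : H ∈ 𝓗'} in H₀. If both 𝓗' and 𝓗'' are reducible, then 𝓗 is reducible. -/

import Mathlib

/-!
Let `q : V⋆ → H₀⋆` be restriction; its kernel is the line `ann H₀ = ℂ f₀` spanned by the
defining functional of `H₀`. Take a u-plus decomposition `𝓐 ⊎ 𝓑` of `𝓗'`. If `f₀ ∈ W(𝓐)` (or
`W(𝓑)`), adding `H₀` to that part does not change its span, so `𝓗` is reducible. Otherwise pull a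
u-plus decomposition of `𝓗''` back to a partition `𝓚₁ ⊎ 𝓚₂` of `𝓗'`, so that `q W(𝓚₁)` and
`q W(𝓚₂)` are independent. Then `W(𝓚₁) ∩ W(𝓚₂) ⊆ ℂ f₀`, and splitting each `𝓚ᵢ` along `𝓐 ⊎ 𝓑`
shows that this intersection lies in `(W(𝓐) ∩ ℂ f₀) + (W(𝓑) ∩ ℂ f₀) = 0`. Hence `f₀` misses one
of the `W(𝓚ᵢ)`, say `W(𝓚₂)`, and then `W(𝓚₁ ∪ {H₀}) = ker q + W(𝓚₁)` is independent of `W(𝓚₂)`.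
-/

open scoped Classical

noncomputable section

variable {V : Type*} [AddCommGroup V] [Module ℂ V]

/-- A linear hyperplane in `V`: the kernel of a non-zero linear functional. -/
def IsHyperplane (H : Submodule ℂ V) : Prop :=
  ∃ f : Module.Dual ℂ V, f ≠ 0 ∧ H = LinearMap.ker f

/-- An arrangement: every member of the finite set `𝓗` is a linear hyperplane. -/
def IsArrangement (𝓗 : Finset (Submodule ℂ V)) : Prop :=
  ∀ H ∈ 𝓗, IsHyperplane H

/-- The span `W(𝓗) ⊆ V⋆` of the defining functionals of the members of `𝓗`,
i.e. the supremum of the dual annihilators of the hyperplanes. -/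
def arrSpan (𝓗 : Finset (Submodule ℂ V)) : Submodule ℂ (Module.Dual ℂ V) :=
  ⨆ H ∈ 𝓗, Submodule.dualAnnihilator H

/-- The centre `T(𝓗)`: the common intersection of the members of `𝓗`. -/
def arrCentre (𝓗 : Finset (Submodule ℂ V)) : Submodule ℂ V :=
  ⨅ H ∈ 𝓗, H

/-- `𝓗` is essential if its centre is zero. -/
def ArrEssential (𝓗 : Finset (Submodule ℂ V)) : Prop :=
  arrCentre 𝓗 = ⊥

/-- `𝓗` is reducible if it admits a u-plus decomposition into two non-empty parts:
a partition `𝓗 = 𝓗₁ ⊎ 𝓗₂` with `W(𝓗) = W(𝓗₁) ⊕ W(𝓗₂)`. -/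
def ArrReducible (𝓗 : Finset (Submodule ℂ V)) : Prop :=
  ∃ 𝓗₁ 𝓗₂ : Finset (Submodule ℂ V), 𝓗₁.Nonempty ∧ 𝓗₂.Nonempty ∧
    Disjoint 𝓗₁ 𝓗₂ ∧ 𝓗₁ ∪ 𝓗₂ = 𝓗 ∧ Disjoint (arrSpan 𝓗₁) (arrSpan 𝓗₂)

/-- `𝓗` is irreducible if it is not reducible. -/
def ArrIrreducible (𝓗 : Finset (Submodule ℂ V)) : Prop :=
  ¬ ArrReducible 𝓗

/-- The induced (restricted) arrangement `𝓗'' = {H ∩ H₀ : H ∈ 𝓗 \ {H₀}}`, viewed as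
an arrangement of hyperplanes in the vector space `H₀`. -/
def inducedArr (𝓗 : Finset (Submodule ℂ V)) (H₀ : Submodule ℂ V) :
    Finset (Submodule ℂ ↥H₀) :=
  (𝓗.erase H₀).image fun H => Submodule.comap H₀.subtype H

namespace Submodule

variable {R E F : Type*} [Ring R] [AddCommGroup E] [Module R E] [AddCommGroup F] [Module R F]

theorem inf_le_ker_of_disjoint_map {q : E →ₗ[R] F} {P Q : Submodule R E}
    (h : Disjoint (P.map q) (Q.map q)) : P ⊓ Q ≤ LinearMap.ker q :=
  LinearMap.le_ker_iff_map.2 (le_bot_iff.1 ((map_inf_le q).trans h.le_bot))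

theorem disjoint_ker_sup_of_disjoint_map {q : E →ₗ[R] F} {P Q : Submodule R E}
    (hPQ : Disjoint (P.map q) (Q.map q)) (hQ : Disjoint (LinearMap.ker q) Q) :
    Disjoint (LinearMap.ker q ⊔ P) Q := by
  rw [disjoint_def]
  rintro x hx hxQ
  obtain ⟨k, hk, p, hp, rfl⟩ := mem_sup.1 hx
  have hqp : q (k + p) ∈ P.map q := by
    rw [map_add, LinearMap.mem_ker.1 hk, zero_add]
    exact mem_map_of_mem hp
  exact disjoint_def.1 hQ _ (disjoint_def.1 hPQ _ hqp (mem_map_of_mem hxQ)) hxQ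

theorem sup_inf_sup_le_of_disjoint {P₁ P₂ Q₁ Q₂ : Submodule R E}
    (h : Disjoint (P₁ ⊔ P₂) (Q₁ ⊔ Q₂)) :
    (P₁ ⊔ Q₁) ⊓ (P₂ ⊔ Q₂) ≤ (P₁ ⊓ P₂) ⊔ (Q₁ ⊓ Q₂) := by
  rintro x ⟨hx₁, hx₂⟩
  obtain ⟨a₁, ha₁, b₁, hb₁, rfl⟩ := mem_sup.1 hx₁
  obtain ⟨a₂, ha₂, b₂, hb₂, hab⟩ := mem_sup.1 hx₂
  have hdiff : a₁ - a₂ = b₂ - b₁ := by rw [sub_eq_sub_iff_add_eq_add, ← hab, add_comm]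
  have ha : a₁ - a₂ = 0 := disjoint_def.1 h _ (sub_mem (mem_sup_left ha₁) (mem_sup_right ha₂))
    (hdiff ▸ sub_mem (mem_sup_right hb₂) (mem_sup_left hb₁))
  have hb : b₂ - b₁ = 0 := hdiff ▸ ha
  rw [sub_eq_zero] at ha hb
  exact add_mem_sup ⟨ha₁, ha ▸ ha₂⟩ ⟨hb₁, hb ▸ hb₂⟩

end Submodule

open Finset

theorem IsHyperplane.isAtom_dualAnnihilator {H : Submodule ℂ V} (hH : IsHyperplane H) :
    IsAtom H.dualAnnihilator := by
  obtain ⟨f, hf, rfl⟩ := hH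
  suffices (LinearMap.ker f).dualAnnihilator = Submodule.span ℂ {f} from
    this ▸ nonzero_span_atom f hf
  refine le_antisymm (fun g hg => ?_) ((Submodule.span_singleton_le_iff_mem _ _).2 ?_)
  · have hker : ⨅ _ : Unit, LinearMap.ker f ≤ LinearMap.ker g := by
      rw [ciInf_const]
      exact fun v hv => (Submodule.mem_dualAnnihilator g).1 hg v hv
    simpa using mem_span_of_iInf_ker_le_ker hker
  · exact (Submodule.mem_dualAnnihilator f).2 fun v hv => hv

theorem le_arrSpan {H : Submodule ℂ V} {𝓗 : Finset (Submodule ℂ V)} (h : H ∈ 𝓗) :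
    H.dualAnnihilator ≤ arrSpan 𝓗 :=
  le_iSup₂_of_le H h le_rfl

theorem arrSpan_mono {𝓢 𝓣 : Finset (Submodule ℂ V)} (h : 𝓢 ⊆ 𝓣) : arrSpan 𝓢 ≤ arrSpan 𝓣 :=
  iSup₂_le fun _ hH => le_arrSpan (h hH)

theorem arrSpan_union (𝓢 𝓣 : Finset (Submodule ℂ V)) :
    arrSpan (𝓢 ∪ 𝓣) = arrSpan 𝓢 ⊔ arrSpan 𝓣 := by
  simp only [arrSpan, mem_union, iSup_or, iSup_sup_eq]

theorem arrSpan_insert (H : Submodule ℂ V) (𝓗 : Finset (Submodule ℂ V)) :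
    arrSpan (insert H 𝓗) = H.dualAnnihilator ⊔ arrSpan 𝓗 := by
  simp only [arrSpan, mem_insert, iSup_or, iSup_sup_eq, iSup_iSup_eq_left]

theorem map_dualMap_arrSpan_le {V' : Type*} [AddCommGroup V'] [Module ℂ V'] (φ : V' →ₗ[ℂ] V)
    {𝓚 : Finset (Submodule ℂ V)} {𝓖 : Finset (Submodule ℂ V')}
    (h : ∀ H ∈ 𝓚, H.comap φ ∈ 𝓖) : (arrSpan 𝓚).map φ.dualMap ≤ arrSpan 𝓖 :=
  Submodule.map_le_iff_le_comap.2 <| iSup₂_le fun H hH => Submodule.map_le_iff_le_comap.1 <|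
    (H.dualAnnihilator_map_dualMap_le φ).trans (le_arrSpan (h H hH))

theorem disjoint_arrSpan_of_subset_union {𝓐 𝓑 𝓚₁ 𝓚₂ : Finset (Submodule ℂ V)}
    {L : Submodule ℂ (Module.Dual ℂ V)} (h₁ : 𝓚₁ ⊆ 𝓐 ∪ 𝓑) (h₂ : 𝓚₂ ⊆ 𝓐 ∪ 𝓑)
    (hAB : Disjoint (arrSpan 𝓐) (arrSpan 𝓑)) (hK : arrSpan 𝓚₁ ⊓ arrSpan 𝓚₂ ≤ L)
    (hA : Disjoint (arrSpan 𝓐) L) (hB : Disjoint (arrSpan 𝓑) L) :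
    Disjoint (arrSpan 𝓚₁) (arrSpan 𝓚₂) := by
  have hsplit : ∀ 𝓚 ⊆ 𝓐 ∪ 𝓑, arrSpan 𝓚 = arrSpan (𝓐 ∩ 𝓚) ⊔ arrSpan (𝓑 ∩ 𝓚) := fun 𝓚 h𝓚 => by
    rw [← arrSpan_union, ← union_inter_distrib_right, inter_eq_right.2 h𝓚]
  have hpart : ∀ 𝓒, arrSpan (𝓒 ∩ 𝓚₁) ⊓ arrSpan (𝓒 ∩ 𝓚₂) ≤ arrSpan 𝓒 ⊓ L := fun 𝓒 =>
    le_inf (inf_le_left.trans (arrSpan_mono inter_subset_left))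
      ((inf_le_inf (arrSpan_mono inter_subset_right) (arrSpan_mono inter_subset_right)).trans hK)
  rw [disjoint_iff, eq_bot_iff]
  calc arrSpan 𝓚₁ ⊓ arrSpan 𝓚₂
      = (arrSpan (𝓐 ∩ 𝓚₁) ⊔ arrSpan (𝓑 ∩ 𝓚₁)) ⊓ (arrSpan (𝓐 ∩ 𝓚₂) ⊔ arrSpan (𝓑 ∩ 𝓚₂)) := by
        rw [← hsplit 𝓚₁ h₁, ← hsplit 𝓚₂ h₂]
    _ ≤ (arrSpan (𝓐 ∩ 𝓚₁) ⊓ arrSpan (𝓐 ∩ 𝓚₂)) ⊔ (arrSpan (𝓑 ∩ 𝓚₁) ⊓ arrSpan (𝓑 ∩ 𝓚₂)) :=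
        Submodule.sup_inf_sup_le_of_disjoint <| hAB.mono
          (sup_le (arrSpan_mono inter_subset_left) (arrSpan_mono inter_subset_left))
          (sup_le (arrSpan_mono inter_subset_left) (arrSpan_mono inter_subset_left))
    _ ≤ (arrSpan 𝓐 ⊓ L) ⊔ (arrSpan 𝓑 ⊓ L) := sup_le_sup (hpart 𝓐) (hpart 𝓑)
    _ = ⊥ := by rw [disjoint_iff.1 hA, disjoint_iff.1 hB, sup_bot_eq]

theorem arrReducible_of_erase_eq_union {𝓗 𝓢 𝓣 : Finset (Submodule ℂ V)} {H₀ : Submodule ℂ V}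
    (h₀ : H₀ ∈ 𝓗) (hT : 𝓣.Nonempty) (hST : Disjoint 𝓢 𝓣) (hun : 𝓢 ∪ 𝓣 = 𝓗.erase H₀)
    (hW : Disjoint (arrSpan (insert H₀ 𝓢)) (arrSpan 𝓣)) : ArrReducible 𝓗 := by
  have hH₀T : H₀ ∉ 𝓣 := fun h => notMem_erase H₀ 𝓗 (hun ▸ mem_union_right _ h)
  refine ⟨insert H₀ 𝓢, 𝓣, insert_nonempty _ _, hT, disjoint_insert_left.2 ⟨hH₀T, hST⟩, ?_, hW⟩
  rw [insert_union, hun, insert_erase h₀]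

theorem exists_erase_eq_union_of_inducedArr {𝓗 : Finset (Submodule ℂ V)} {H₀ : Submodule ℂ V}
    (h : ArrReducible (inducedArr 𝓗 H₀)) :
    ∃ 𝓚₁ 𝓚₂ : Finset (Submodule ℂ V), 𝓚₁.Nonempty ∧ 𝓚₂.Nonempty ∧ Disjoint 𝓚₁ 𝓚₂ ∧
      𝓚₁ ∪ 𝓚₂ = 𝓗.erase H₀ ∧
      Disjoint ((arrSpan 𝓚₁).map H₀.dualRestrict) ((arrSpan 𝓚₂).map H₀.dualRestrict) := by
  obtain ⟨𝓖₁, 𝓖₂, hG₁, hG₂, hG, hGun, hWG⟩ := h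
  have hpreimage : ∀ G ∈ 𝓖₁ ∪ 𝓖₂, ∃ H ∈ 𝓗.erase H₀, H.comap H₀.subtype = G :=
    fun G hG => mem_image.1 (by rwa [hGun] at hG)
  refine ⟨(𝓗.erase H₀).filter (·.comap H₀.subtype ∈ 𝓖₁),
    (𝓗.erase H₀).filter (·.comap H₀.subtype ∈ 𝓖₂), ?_, ?_,
    disjoint_filter.2 fun _ _ h₁ h₂ => disjoint_left.1 hG h₁ h₂, ?_,
    hWG.mono (map_dualMap_arrSpan_le _ fun H hH => (mem_filter.1 hH).2)
      (map_dualMap_arrSpan_le _ fun H hH => (mem_filter.1 hH).2)⟩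
  · obtain ⟨G, hG⟩ := hG₁
    obtain ⟨H, hH, rfl⟩ := hpreimage G (mem_union_left _ hG)
    exact ⟨H, mem_filter.2 ⟨hH, hG⟩⟩
  · obtain ⟨G, hG⟩ := hG₂
    obtain ⟨H, hH, rfl⟩ := hpreimage G (mem_union_right _ hG)
    exact ⟨H, mem_filter.2 ⟨hH, hG⟩⟩
  · rw [← filter_or]
    exact filter_true_of_mem fun H hH => mem_union.1 (hGun ▸ mem_image_of_mem _ hH)

theorem reducible_of_deleted_and_induced_reducible_general
    (𝓗 : Finset (Submodule ℂ V)) (harr : IsArrangement 𝓗)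
    (H₀ : Submodule ℂ V) (h₀ : H₀ ∈ 𝓗)
    (hdel : ArrReducible (𝓗.erase H₀))
    (hind : ArrReducible (inducedArr 𝓗 H₀)) :
    ArrReducible 𝓗 := by
  have hL := (harr H₀ h₀).isAtom_dualAnnihilator
  obtain ⟨𝓐, 𝓑, hA, hB, hAB, hABun, hWAB⟩ := hdel
  by_cases hLA : H₀.dualAnnihilator ≤ arrSpan 𝓐
  · refine arrReducible_of_erase_eq_union h₀ hB hAB hABun ?_
    rwa [arrSpan_insert, sup_eq_right.2 hLA]
  by_cases hLB : H₀.dualAnnihilator ≤ arrSpan 𝓑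
  · refine arrReducible_of_erase_eq_union h₀ hA hAB.symm (union_comm 𝓑 𝓐 ▸ hABun) ?_
    rwa [arrSpan_insert, sup_eq_right.2 hLB, disjoint_comm]
  obtain ⟨𝓚₁, 𝓚₂, hK₁, hK₂, hK, hKun, hWK⟩ := exists_erase_eq_union_of_inducedArr hind
  have hWK' : Disjoint (arrSpan 𝓚₁) (arrSpan 𝓚₂) :=
    disjoint_arrSpan_of_subset_union (hABun ▸ hKun ▸ subset_union_left)
      (hABun ▸ hKun ▸ subset_union_right) hWAB (Submodule.inf_le_ker_of_disjoint_map hWK)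
      (hL.not_le_iff_disjoint.1 hLA).symm (hL.not_le_iff_disjoint.1 hLB).symm
  by_cases hLK₂ : H₀.dualAnnihilator ≤ arrSpan 𝓚₂
  · have hLK₁ : Disjoint H₀.dualAnnihilator (arrSpan 𝓚₁) := hL.not_le_iff_disjoint.1
      fun hLK₁ => hL.ne_bot (disjoint_self.1 (hWK'.mono hLK₁ hLK₂))
    refine arrReducible_of_erase_eq_union h₀ hK₁ hK.symm (union_comm 𝓚₂ 𝓚₁ ▸ hKun) ?_
    rw [arrSpan_insert]
    exact Submodule.disjoint_ker_sup_of_disjoint_map hWK.symm hLK₁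
  · refine arrReducible_of_erase_eq_union h₀ hK₂ hK hKun ?_
    rw [arrSpan_insert]
    exact Submodule.disjoint_ker_sup_of_disjoint_map hWK (hL.not_le_iff_disjoint.1 hLK₂)

/-- If both the deleted arrangement `𝓗' = 𝓗 \ {H₀}` and the induced
arrangement `𝓗''` on `H₀` are reducible, then `𝓗` is reducible. -/
theorem reducible_of_deleted_and_induced_reducible
    [FiniteDimensional ℂ V]
    (𝓗 : Finset (Submodule ℂ V)) (harr : IsArrangement 𝓗)
    (H₀ : Submodule ℂ V) (h₀ : H₀ ∈ 𝓗)
    (hdel : ArrReducible (𝓗.erase H₀))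
    (hind : ArrReducible (inducedArr 𝓗 H₀)) :
    ArrReducible 𝓗 :=
  reducible_of_deleted_and_induced_reducible_general 𝓗 harr H₀ h₀ hdel hind
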